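/- arXiv:1806.00262 — 4 statements merged into one kernel-verified Lean document; each statement's English description precedes it below -/
import Mathlib

section
/- In any Lie algebra satisfying the identity [[x,y],[z,t]] being central (i.e. [x,y,[z,t],u]=0 for all elements, with left-normalized brackets), for every integer k ≥ 0 the identity [x,y,t_1,...,t_{2k},z] + [y,z,t_1,...,t_{2k},x] + [z,x,t_1,...,t_{2k},y] = 0 holds for all elements x,y,z,t_1,...,t_{2k}. -/
/-- Left-normalized Lie bracket: `lnb x [a₁,…,aₙ] = [[…[x,a₁],…],aₙ]`. -/
def lnb {L : Type*} [LieRing L] (x : L) (l : List L) : L :=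
  l.foldl (fun a b => ⁅a, b⁆) x

section CbmAux

variable {L : Type*} [LieRing L]

theorem lnb_nil (x : L) : lnb x [] = x := rfl

theorem lnb_cons (x a : L) (l : List L) : lnb x (a :: l) = lnb ⁅x, a⁆ l := rfl

theorem lnb_append (x : L) (l₁ l₂ : List L) : lnb x (l₁ ++ l₂) = lnb (lnb x l₁) l₂ := by
  simp [lnb, List.foldl_append]

theorem lnb_concat (x a : L) (l : List L) : lnb x (l ++ [a]) = ⁅lnb x l, a⁆ := by
  rw [lnb_append]; rfl

theorem lnb_zero (l : List L) : lnb (0 : L) l = 0 := by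
  induction l with
  | nil => rfl
  | cons a l ih => rw [lnb_cons, zero_lie]; exact ih

theorem lnb_add (u v : L) (l : List L) : lnb (u + v) l = lnb u l + lnb v l := by
  induction l generalizing u v with
  | nil => rfl
  | cons a l ih => simp only [lnb_cons, add_lie]; exact ih _ _

theorem lnb_neg (u : L) (l : List L) : lnb (-u) l = -lnb u l := by
  induction l generalizing u with
  | nil => rfl
  | cons a l ih => simp only [lnb_cons, neg_lie]; exact ih _

/-- Jacobi identity in a convenient form. -/
theorem cbm_jac (u a b : L) : ⁅⁅u, a⁆, b⁆ = ⁅⁅u, b⁆, a⁆ + ⁅u, ⁅a, b⁆⁆ := by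
  rw [leibniz_lie u a b, ← lie_skew a ⁅u, b⁆]
  abel

/-- `w` is a bracket of two elements. -/
def IsBr (w : L) : Prop := ∃ p q : L, w = ⁅p, q⁆

theorem isBr_lie (p q : L) : IsBr ⁅p, q⁆ := ⟨p, q, rfl⟩

theorem isBr_lnb {w : L} (h : IsBr w) (l : List L) : IsBr (lnb w l) := by
  induction l generalizing w with
  | nil => exact h
  | cons a l ih => rw [lnb_cons]; exact ih (isBr_lie _ _)

theorem cbm_half (F : Type*) [Field F] (hF : ringChar F ≠ 2) {M : Type*} [AddCommGroup M]
    [Module F M] {v : M} (h : v + v = 0) : v = 0 := by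
  have h2 : (2 : F) • v = 0 := by rw [two_smul]; exact h
  have hv : v = (2 : F)⁻¹ • ((2 : F) • v) := by
    rw [smul_smul, inv_mul_cancel₀ (Ring.two_ne_zero hF), one_smul]
  rw [hv, h2, smul_zero]

theorem cbm_regroup {M : Type*} [AddCommGroup M] (a₁ h₁ a₂ h₂ a₃ h₃ : M)
    (hA : a₁ + a₂ + a₃ = 0) (hH : h₁ + h₂ + h₃ = 0) :
    a₁ + h₁ + (a₂ + h₂) + (a₃ + h₃) = 0 := by
  have h : a₁ + h₁ + (a₂ + h₂) + (a₃ + h₃) = a₁ + a₂ + a₃ + (h₁ + h₂ + h₃) := by abel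
  rw [h, hA, hH, add_zero]

theorem cbm_combine {α M : Type*} [AddCommGroup M] (H : α → α → α → α → α → M)
    (hR3 : ∀ a b c d e, H a b c d e = H a b d c e - H a b e c d)
    (hR4 : ∀ a b c d e, H a b c d e + H b c a d e + H c a b d e = 0)
    (hR6 : ∀ a b c d e, H a b c d e = H d e c a b)
    (hA1 : ∀ a b c d e, H b a c d e = -H a b c d e)
    (hA2 : ∀ a b c d e, H a b c e d = -H a b c d e)
    (x y z t s : α) :
    H x y t s z + H y z t s x + H z x t s y +
      (H x y t s z + H y z t s x + H z x t s y) = 0 := by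
  have z0 : H x y z t s - H x y t z s + H x y s z t = 0 := by rw [hR3 x y z t s]; abel
  have z1 : H y x z t s + H x y z t s = 0 := by rw [hA1 x y z t s]; abel
  have z2 : H x y t z s + H y t x z s + H t x y z s = 0 := hR4 x y t z s
  have z3 : H x y t s z + H x y t z s = 0 := by rw [hA2 x y t z s]; abel
  have z4 : H x y s z t + H y s x z t + H s x y z t = 0 := hR4 x y s z t
  have z5 : H x z y t s - H x z t y s + H x z s y t = 0 := by rw [hR3 x z y t s]; abel
  have z6 : H x z y t s + H z y x t s + H y x z t s = 0 := hR4 x z y t s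
  have z7 : H x z t y s - H y s t x z = 0 := by rw [hR6 x z t y s]; abel
  have z8 : H x z t s y + H x z t y s = 0 := by rw [hA2 x z t y s]; abel
  have z9 : H z x t s y + H x z t s y = 0 := by rw [hA1 x z t s y]; abel
  have z10 : H x z s y t - H y t s x z = 0 := by rw [hR6 x z s y t]; abel
  have z11 : H x t y z s - H x t z y s + H x t s y z = 0 := by rw [hR3 x t y z s]; abel
  have z12 : H t x y z s + H x t y z s = 0 := by rw [hA1 x t y z s]; abel
  have z13 : H x t z y s - H y s z x t = 0 := by rw [hR6 x t z y s]; abel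
  have z14 : H x t s y z - H y z s x t = 0 := by rw [hR6 x t s y z]; abel
  have z15 : H x s y z t - H x s z y t + H x s t y z = 0 := by rw [hR3 x s y z t]; abel
  have z16 : H s x y z t + H x s y z t = 0 := by rw [hA1 x s y z t]; abel
  have z17 : H x s z y t - H y t z x s = 0 := by rw [hR6 x s z y t]; abel
  have z18 : H x s t y z - H y z t x s = 0 := by rw [hR6 x s t y z]; abel
  have z19 : H y z x t s - H y z t x s + H y z s x t = 0 := by rw [hR3 y z x t s]; abel
  have z20 : H z y x t s + H y z x t s = 0 := by rw [hA1 y z x t s]; abel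
  have z21 : H y z t s x + H y z t x s = 0 := by rw [hA2 y z t x s]; abel
  have z22 : H y t x z s - H y t z x s + H y t s x z = 0 := by rw [hR3 y t x z s]; abel
  have z23 : H y s x z t - H y s z x t + H y s t x z = 0 := by rw [hR3 y s x z t]; abel
  have main : H x y t s z + H y z t s x + H z x t s y +
      (H x y t s z + H y z t s x + H z x t s y) =
      (H x y z t s - H x y t z s + H x y s z t) +
        -(H y x z t s + H x y z t s) +
        -(H x y t z s + H y t x z s + H t x y z s) +
        ((H x y t s z + H x y t z s) + (H x y t s z + H x y t z s)) +
        -(H x y s z t + H y s x z t + H s x y z t) +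
        -(H x z y t s - H x z t y s + H x z s y t) +
        (H x z y t s + H z y x t s + H y x z t s) +
        (H x z t y s - H y s t x z) +
        -((H x z t s y + H x z t y s) + (H x z t s y + H x z t y s)) +
        ((H z x t s y + H x z t s y) + (H z x t s y + H x z t s y)) +
        (H x z s y t - H y t s x z) +
        -(H x t y z s - H x t z y s + H x t s y z) +
        (H t x y z s + H x t y z s) +
        -(H x t z y s - H y s z x t) +
        (H x t s y z - H y z s x t) +
        -(H x s y z t - H x s z y t + H x s t y z) +
        (H s x y z t + H x s y z t) +
        -(H x s z y t - H y t z x s) +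
        (H x s t y z - H y z t x s) +
        (H y z x t s - H y z t x s + H y z s x t) +
        -(H z y x t s + H y z x t s) +
        ((H y z t s x + H y z t x s) + (H y z t s x + H y z t x s)) +
        (H y t x z s - H y t z x s + H y t s x z) +
        (H y s x z t - H y s z x t + H y s t x z) := by abel
  rw [main, z0, z1, z2, z3, z4, z5, z6, z7, z8, z9, z10, z11, z12, z13, z14, z15, z16, z17, z18, z19, z20, z21, z22, z23]
  norm_num
theorem cbm_cent_lnb {C : L} (hC : ∀ w : L, ⁅C, w⁆ = 0) (l : List L) (w : L) :
    ⁅lnb C l, w⁆ = 0 := by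
  cases l with
  | nil => exact hC w
  | cons a l => rw [lnb_cons, hC a, lnb_zero, zero_lie]

variable (hcm : ∀ x y u v z : L, ⁅⁅⁅x, y⁆, ⁅u, v⁆⁆, z⁆ = 0)

include hcm

theorem cbm_cent {P Q : L} (hP : IsBr P) (hQ : IsBr Q) (w : L) : ⁅⁅P, Q⁆, w⁆ = 0 := by
  obtain ⟨p₁, p₂, rfl⟩ := hP
  obtain ⟨q₁, q₂, rfl⟩ := hQ
  exact hcm p₁ p₂ q₁ q₂ w


theorem cbm_peel {P Q : L} (hP : IsBr P) (hQ : IsBr Q) (u : L) :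
    ⁅⁅P, u⁆, Q⁆ = -⁅P, ⁅Q, u⁆⁆ := by
  rw [cbm_jac P u Q, cbm_cent hcm hP hQ u, zero_add, ← lie_skew u Q, lie_neg]

theorem cbm_aux {P U : L} (hP : IsBr P) (hU : IsBr U) (e : L) :
    ⁅P, ⁅U, e⁆⁆ = -⁅⁅P, e⁆, U⁆ := by
  rw [leibniz_lie P U e, cbm_cent hcm hP hU e, zero_add]
  exact (lie_skew _ _).symm

theorem cbm_flip : ∀ (l : List L) (P Q : L), IsBr P → IsBr Q →
    ⁅lnb P l, Q⁆ = (-1 : ℤ) ^ l.length • ⁅P, lnb Q l.reverse⁆ := by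
  intro l
  induction l with
  | nil => intro P Q _ _; simp [lnb_nil]
  | cons a l ih =>
    intro P Q hP hQ
    rw [lnb_cons, ih ⁅P, a⁆ Q (isBr_lie P a) hQ,
      cbm_peel hcm hP (isBr_lnb hQ l.reverse) a, ← lnb_concat, ← List.reverse_cons]
    simp only [List.length_cons, pow_succ, mul_smul, neg_one_zsmul, smul_neg]

theorem cbm_perm : ∀ {l l' : List L}, l.Perm l' → ∀ w : L, IsBr w → ∀ Q : L,
    ⁅lnb w l, Q⁆ = ⁅lnb w l', Q⁆ := by
  intro l l' h
  induction h with
  | nil => intro w _ Q; rfl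
  | cons a _ ih => intro w hw Q; rw [lnb_cons, lnb_cons]; exact ih ⁅w, a⁆ (isBr_lie _ _) Q
  | swap a b l =>
    intro w hw Q
    obtain ⟨p, q, rfl⟩ := hw
    simp only [lnb_cons]
    rw [cbm_jac ⁅p, q⁆ a b, lnb_add, add_lie,
      cbm_cent_lnb (fun v => hcm p q a b v) l Q, add_zero]
  | trans _ _ ih₁ ih₂ => intro w hw Q; rw [ih₁ w hw Q, ih₂ w hw Q]

theorem cbm_R3 {P : L} (hP : IsBr P) (c d e : L) :
    ⁅⁅P, c⁆, ⁅d, e⁆⁆ = ⁅⁅P, d⁆, ⁅c, e⁆⁆ - ⁅⁅P, e⁆, ⁅c, d⁆⁆ := by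
  have h1 : ⁅⁅P, c⁆, ⁅d, e⁆⁆ = ⁅P, ⁅c, ⁅d, e⁆⁆⁆ := by
    rw [cbm_jac P c ⁅d, e⁆, cbm_cent hcm hP (isBr_lie d e) c, zero_add]
  have h4 : ⁅P, ⁅d, ⁅c, e⁆⁆⁆ = ⁅⁅P, d⁆, ⁅c, e⁆⁆ := by
    rw [← lie_skew d ⁅c, e⁆, lie_neg, cbm_aux hcm hP (isBr_lie c e) d, neg_neg]
  rw [h1, leibniz_lie c d e, lie_add, cbm_aux hcm hP (isBr_lie c d) e, h4]
  abel




theorem cbm_key (F : Type*) [Field F] (hF : ringChar F ≠ 2) [LieAlgebra F L] :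
    ∀ (k : ℕ) (l : List L), l.length = 2 * k → ∀ x y z : L,
    lnb ⁅x, y⁆ (l ++ [z]) + lnb ⁅y, z⁆ (l ++ [x]) + lnb ⁅z, x⁆ (l ++ [y]) = 0 := by
  intro k
  induction k with
  | zero =>
    intro l hl x y z
    obtain rfl : l = [] := by
      cases l with
      | nil => rfl
      | cons a l => simp at hl
    show ⁅⁅x, y⁆, z⁆ + ⁅⁅y, z⁆, x⁆ + ⁅⁅z, x⁆, y⁆ = 0
    have h1 := cbm_jac x y z
    have h2 : ⁅⁅y, z⁆, x⁆ = -⁅x, ⁅y, z⁆⁆ := by rw [← lie_skew x ⁅y, z⁆, neg_neg]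
    have h3 : ⁅⁅z, x⁆, y⁆ = -⁅⁅x, z⁆, y⁆ := by rw [← lie_skew z x, neg_lie]
    rw [h1, h2, h3]; abel
  | succ k ih =>
    intro l hl x y z
    rcases l.eq_nil_or_concat with rfl | ⟨l₁, s, rfl⟩
    · simp at hl <;> omega
    rcases l₁.eq_nil_or_concat with rfl | ⟨l', t, rfl⟩
    · simp at hl <;> omega
    simp only [List.concat_eq_append] at hl ⊢
    have hl' : l'.length = 2 * k := by
      simp only [List.length_append, List.length_cons, List.length_nil] at hl; omega
    have hW : ∀ a b : L, IsBr (lnb ⁅a, b⁆ l') := fun a b => isBr_lnb (isBr_lie a b) l'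
    have step : ∀ a b c : L,
        ⁅⁅⁅lnb ⁅a, b⁆ l', t⁆, s⁆, c⁆ =
          ⁅⁅⁅lnb ⁅a, b⁆ l', c⁆, t⁆, s⁆ + ⁅⁅lnb ⁅a, b⁆ l', t⁆, ⁅s, c⁆⁆ := by
      intro a b c
      rw [cbm_jac ⁅lnb ⁅a, b⁆ l', t⁆ s c, cbm_jac (lnb ⁅a, b⁆ l') t c, add_lie,
        cbm_cent hcm (hW a b) (isBr_lie t c) s, add_zero]
    have hR3' : ∀ a b c d e : L, ⁅⁅lnb ⁅a, b⁆ l', c⁆, ⁅d, e⁆⁆ =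
        ⁅⁅lnb ⁅a, b⁆ l', d⁆, ⁅c, e⁆⁆ - ⁅⁅lnb ⁅a, b⁆ l', e⁆, ⁅c, d⁆⁆ :=
      fun a b c d e => cbm_R3 hcm (hW a b) c d e
    have hR4' : ∀ a b c d e : L, ⁅⁅lnb ⁅a, b⁆ l', c⁆, ⁅d, e⁆⁆ +
        ⁅⁅lnb ⁅b, c⁆ l', a⁆, ⁅d, e⁆⁆ + ⁅⁅lnb ⁅c, a⁆ l', b⁆, ⁅d, e⁆⁆ = 0 := by
      intro a b c d e
      rw [← lnb_concat ⁅a, b⁆ c l', ← lnb_concat ⁅b, c⁆ a l', ← lnb_concat ⁅c, a⁆ b l',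
        ← add_lie, ← add_lie, ih l' hl' a b c, zero_lie]
    have hR6' : ∀ a b c d e : L, ⁅⁅lnb ⁅a, b⁆ l', c⁆, ⁅d, e⁆⁆ =
        ⁅⁅lnb ⁅d, e⁆ l', c⁆, ⁅a, b⁆⁆ := by
      intro a b c d e
      rw [← lnb_concat ⁅a, b⁆ c l', ← lnb_concat ⁅d, e⁆ c l',
        cbm_flip hcm (l' ++ [c]) ⁅a, b⁆ ⁅d, e⁆ (isBr_lie a b) (isBr_lie d e)]
      have hodd : (-1 : ℤ) ^ (l' ++ [c]).length = -1 := by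
        have hlen : (l' ++ [c]).length = 2 * k + 1 := by simp [hl']
        rw [hlen]
        exact Odd.neg_one_pow ⟨k, rfl⟩
      rw [hodd, neg_one_zsmul,
        lie_skew (lnb ⁅d, e⁆ (l' ++ [c]).reverse) ⁅a, b⁆]
      exact cbm_perm hcm (List.reverse_perm _) ⁅d, e⁆ (isBr_lie d e) ⁅a, b⁆
    have hA1' : ∀ a b c d e : L, ⁅⁅lnb ⁅b, a⁆ l', c⁆, ⁅d, e⁆⁆ =
        -⁅⁅lnb ⁅a, b⁆ l', c⁆, ⁅d, e⁆⁆ := by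
      intro a b c d e
      rw [← lie_skew b a, lnb_neg, neg_lie, neg_lie]
    have hA2' : ∀ a b c d e : L, ⁅⁅lnb ⁅a, b⁆ l', c⁆, ⁅e, d⁆⁆ =
        -⁅⁅lnb ⁅a, b⁆ l', c⁆, ⁅d, e⁆⁆ := by
      intro a b c d e
      rw [← lie_skew e d, lie_neg]
    simp only [lnb_concat]
    rw [step x y z, step y z x, step z x y]
    have h0 := ih l' hl' x y z
    rw [lnb_concat, lnb_concat, lnb_concat] at h0
    have hA : ⁅⁅⁅lnb ⁅x, y⁆ l', z⁆, t⁆, s⁆ + ⁅⁅⁅lnb ⁅y, z⁆ l', x⁆, t⁆, s⁆ +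
        ⁅⁅⁅lnb ⁅z, x⁆ l', y⁆, t⁆, s⁆ = 0 := by
      simp only [← add_lie]
      rw [h0, zero_lie, zero_lie]
    exact cbm_regroup _ _ _ _ _ _ hA (cbm_half F hF
      (cbm_combine (fun a b c d e => ⁅⁅lnb ⁅a, b⁆ l', c⁆, ⁅d, e⁆⁆)
        hR3' hR4' hR6' hA1' hA2' x y z t s))

end CbmAux

/-- In any Lie algebra (over a field of characteristic ≠ 2) satisfying the
centre-by-metabelian identity `[x,y,[u,v],z] = 0`, for every `k ≥ 0` the identity
`[x,y,t₁,…,t_{2k},z] + [y,z,t₁,…,t_{2k},x] + [z,x,t₁,…,t_{2k},y] = 0` holds. -/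
theorem stmt0 (F : Type) [Field F] (hF : ringChar F ≠ 2)
    (L : Type) [LieRing L] [LieAlgebra F L]
    (hcm : ∀ x y u v z : L, ⁅⁅⁅x, y⁆, ⁅u, v⁆⁆, z⁆ = 0)
    (k : ℕ) (x y z : L) (t : ℕ → L) :
    lnb x (y :: (List.ofFn fun i : Fin (2 * k) => t i) ++ [z]) +
      lnb y (z :: (List.ofFn fun i : Fin (2 * k) => t i) ++ [x]) +
      lnb z (x :: (List.ofFn fun i : Fin (2 * k) => t i) ++ [y]) = 0 := by
  simp only [List.cons_append]
  rw [lnb_cons, lnb_cons, lnb_cons]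
  exact cbm_key hcm F hF k _ (by simp) x y z
end

section
/- The adjoint Lie algebra of the associative algebra M_{1,1}(E^1) satisfies the identity [x,y,[z,t],u] = 0 (left-normalized brackets). -/
/-- The Grassmann (exterior) algebra over `F` on countably many generators. -/
abbrev GrAlg (F : Type) [Field F] := ExteriorAlgebra F (ℕ →₀ F)

/-- The `i`-th Grassmann generator `e_i`. -/
noncomputable def gen (F : Type) [Field F] (i : ℕ) : GrAlg F :=
  ExteriorAlgebra.ι F (Finsupp.single i (1 : F))

/-- The submodule of generators (degree-one part). -/
noncomputable def grange (F : Type) [Field F] : Submodule F (GrAlg F) :=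
  LinearMap.range (ExteriorAlgebra.ι F : (ℕ →₀ F) →ₗ[F] GrAlg F)

/-- The even part `E^1_0` of the unital Grassmann algebra: span of `1` and
products of even length. -/
noncomputable def evenPart1 (F : Type) [Field F] : Submodule F (GrAlg F) :=
  ⨆ n : ℕ, (grange F) ^ (2 * n)

/-- The even part `E_0` of the non-unital Grassmann algebra: span of
products of even positive length. -/
noncomputable def evenPart (F : Type) [Field F] : Submodule F (GrAlg F) :=
  ⨆ n : ℕ, (grange F) ^ (2 * (n + 1))

/-- The odd part `E_1`: span of products of odd length. -/
noncomputable def oddPart (F : Type) [Field F] : Submodule F (GrAlg F) :=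
  ⨆ n : ℕ, (grange F) ^ (2 * n + 1)

/-- The set of matrices of `M_{1,1}`: diagonal entries in `D`, off-diagonal
entries in the odd part. -/
def M11carrier (F : Type) [Field F] (D : Submodule F (GrAlg F)) :
    Set (Matrix (Fin 2) (Fin 2) (GrAlg F)) :=
  {A | A 0 0 ∈ D ∧ A 1 1 ∈ D ∧ A 0 1 ∈ oddPart F ∧ A 1 0 ∈ oddPart F}

section Aux

variable {F : Type} [Field F]

/-- A generator ("anti")commutes with a homogeneous element according to parity. -/
lemma gr_gen_comm (w : ℕ →₀ F) {n : ℕ} {x : GrAlg F} (hx : x ∈ grange F ^ n) :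
    ExteriorAlgebra.ι F w * x = ((-1 : F) ^ n) • (x * ExteriorAlgebra.ι F w) := by
  induction hx using Submodule.pow_induction_on_left' with
  | algebraMap r => simp [Algebra.commutes]
  | add a b i ha hb iha ihb => simp only [mul_add, add_mul, iha, ihb, smul_add]
  | mem_mul m hm i a ha iha =>
      obtain ⟨v, rfl⟩ := hm
      have h1 : ExteriorAlgebra.ι F w * ExteriorAlgebra.ι F v
          = -(ExteriorAlgebra.ι F v * ExteriorAlgebra.ι F w) :=
        eq_neg_of_add_eq_zero_left (ExteriorAlgebra.ι_add_mul_swap w v)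
      calc ExteriorAlgebra.ι F w * (ExteriorAlgebra.ι F v * a)
          = (ExteriorAlgebra.ι F w * ExteriorAlgebra.ι F v) * a := by rw [mul_assoc]
        _ = -(ExteriorAlgebra.ι F v * (ExteriorAlgebra.ι F w * a)) := by
            rw [h1]; simp [mul_assoc]
        _ = -(ExteriorAlgebra.ι F v * ((-1 : F) ^ i • (a * ExteriorAlgebra.ι F w))) := by
            rw [iha]
        _ = ((-1 : F) ^ (i + 1)) • (ExteriorAlgebra.ι F v * a * ExteriorAlgebra.ι F w) := by
            rw [mul_smul_comm, pow_succ]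
            rw [mul_comm ((-1:F)^i) (-1 : F)]
            rw [mul_smul, neg_one_smul, mul_assoc]

/-- Homogeneous elements commute up to sign given by the product of degrees. -/
lemma gr_comm {m n : ℕ} {a b : GrAlg F} (ha : a ∈ grange F ^ m) (hb : b ∈ grange F ^ n) :
    a * b = ((-1 : F) ^ (m * n)) • (b * a) := by
  induction ha using Submodule.pow_induction_on_left' with
  | algebraMap r => simp [Algebra.commutes]
  | add a c i h1 h2 ih1 ih2 => simp only [mul_add, add_mul, ih1, ih2, smul_add]
  | mem_mul x hx i a ha iha =>
      obtain ⟨v, rfl⟩ := hx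
      calc (ExteriorAlgebra.ι F v * a) * b
          = ExteriorAlgebra.ι F v * (a * b) := by rw [mul_assoc]
        _ = ExteriorAlgebra.ι F v * ((-1 : F) ^ (i * n) • (b * a)) := by rw [iha]
        _ = ((-1 : F) ^ (i * n)) • (ExteriorAlgebra.ι F v * b * a) := by
            rw [mul_smul_comm, mul_assoc]
        _ = ((-1 : F) ^ (i * n)) • (((-1 : F) ^ n • (b * ExteriorAlgebra.ι F v)) * a) := by
            rw [gr_gen_comm v hb]
        _ = ((-1 : F) ^ (i.succ * n)) • (b * (ExteriorAlgebra.ι F v * a)) := by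
            rw [smul_mul_assoc, smul_smul, ← pow_add, mul_assoc]
            congr 2
            rw [Nat.succ_mul, Nat.add_comm]

/-- Elements of the even part are central. -/
lemma even1_comm {a : GrAlg F} (ha : a ∈ evenPart1 F) (b : GrAlg F) : a * b = b * a := by
  induction ha using Submodule.iSup_induction' with
  | mem n a ha =>
      induction b using ExteriorAlgebra.induction with
      | algebraMap r => simp [Algebra.commutes]
      | ι w =>
          rw [gr_gen_comm w ha]
          simp [pow_mul]
      | mul x y ihx ihy => rw [← mul_assoc, ihx, mul_assoc, ihy, mul_assoc]
      | add x y ihx ihy => rw [mul_add, add_mul, ihx, ihy]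
  | zero => simp
  | add x y hx hy ihx ihy => rw [add_mul, mul_add, ihx, ihy]

/-- Odd elements anticommute. -/
lemma odd_anticomm {a b : GrAlg F} (ha : a ∈ oddPart F) (hb : b ∈ oddPart F) :
    a * b = -(b * a) := by
  induction ha using Submodule.iSup_induction' with
  | mem m a ha =>
      induction hb using Submodule.iSup_induction' with
      | mem n b hb =>
          rw [gr_comm ha hb]
          have : Odd ((2 * m + 1) * (2 * n + 1)) := (odd_two_mul_add_one m).mul (odd_two_mul_add_one n)
          rw [this.neg_one_pow, neg_one_smul]
      | zero => simp
      | add x y hx hy ihx ihy => rw [mul_add, add_mul, ihx, ihy, neg_add]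
  | zero => simp
  | add x y hx hy ihx ihy => rw [add_mul, mul_add, ihx, ihy, neg_add]

/-- Generic product membership for sups of powers. -/
lemma mul_mem_iSup_pow {f g h : ℕ → ℕ} (hfg : ∀ m n, ∃ k, f m + g n = h k)
    {a b : GrAlg F} (ha : a ∈ ⨆ n, grange F ^ f n) (hb : b ∈ ⨆ n, grange F ^ g n) :
    a * b ∈ ⨆ n, grange F ^ h n := by
  induction ha using Submodule.iSup_induction' with
  | mem m a ha =>
      induction hb using Submodule.iSup_induction' with
      | mem n b hb =>
          obtain ⟨k, hk⟩ := hfg m n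
          refine Submodule.mem_iSup_of_mem k ?_
          rw [← hk, pow_add]
          exact Submodule.mul_mem_mul ha hb
      | zero => simp
      | add x y hx hy ihx ihy => rw [mul_add]; exact add_mem ihx ihy
  | zero => simp
  | add x y hx hy ihx ihy => rw [add_mul]; exact add_mem ihx ihy

lemma odd_mul_odd {a b : GrAlg F} (ha : a ∈ oddPart F) (hb : b ∈ oddPart F) :
    a * b ∈ evenPart1 F :=
  mul_mem_iSup_pow (fun m n => ⟨m + n + 1, by ring⟩) ha hb

lemma even1_mul_odd {a b : GrAlg F} (ha : a ∈ evenPart1 F) (hb : b ∈ oddPart F) :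
    a * b ∈ oddPart F :=
  mul_mem_iSup_pow (fun m n => ⟨m + n, by ring⟩) ha hb

lemma odd_mul_even1 {a b : GrAlg F} (ha : a ∈ oddPart F) (hb : b ∈ evenPart1 F) :
    a * b ∈ oddPart F :=
  mul_mem_iSup_pow (fun m n => ⟨m + n, by ring⟩) ha hb

end Aux

section Mat

variable {F : Type} [Field F]

/-- Structure of the bracket of two elements of `M_{1,1}(E¹)`. -/
lemma bracket_form {A B : Matrix (Fin 2) (Fin 2) (GrAlg F)}
    (hA : A ∈ M11carrier F (evenPart1 F)) (hB : B ∈ M11carrier F (evenPart1 F)) :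
    ⁅A, B⁆ 0 0 = ⁅A, B⁆ 1 1 ∧ ⁅A, B⁆ 0 0 ∈ evenPart1 F ∧
      ⁅A, B⁆ 0 1 ∈ oddPart F ∧ ⁅A, B⁆ 1 0 ∈ oddPart F := by
  obtain ⟨hA00, hA11, hA01, hA10⟩ := hA
  obtain ⟨hB00, hB11, hB01, hB10⟩ := hB
  have e00 : ⁅A, B⁆ 0 0 = A 0 1 * B 1 0 - B 0 1 * A 1 0 := by
    simp only [Ring.lie_def, Matrix.sub_apply, Matrix.mul_apply, Fin.sum_univ_two]
    rw [even1_comm hB00 (A 0 0)]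
    abel
  have e11 : ⁅A, B⁆ 1 1 = A 1 0 * B 0 1 - B 1 0 * A 0 1 := by
    simp only [Ring.lie_def, Matrix.sub_apply, Matrix.mul_apply, Fin.sum_univ_two]
    rw [even1_comm hB11 (A 1 1)]
    abel
  refine ⟨?_, ?_, ?_, ?_⟩
  · rw [e00, e11, odd_anticomm hA01 hB10, odd_anticomm hB01 hA10]
    abel
  · rw [e00]
    exact sub_mem (odd_mul_odd hA01 hB10) (odd_mul_odd hB01 hA10)
  · simp only [Ring.lie_def, Matrix.sub_apply, Matrix.mul_apply, Fin.sum_univ_two]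
    exact sub_mem (add_mem (even1_mul_odd hA00 hB01) (odd_mul_even1 hA01 hB11))
      (add_mem (even1_mul_odd hB00 hA01) (odd_mul_even1 hB01 hA11))
  · simp only [Ring.lie_def, Matrix.sub_apply, Matrix.mul_apply, Fin.sum_univ_two]
    exact sub_mem (add_mem (odd_mul_even1 hA10 hB00) (even1_mul_odd hA11 hB10))
      (add_mem (odd_mul_even1 hB10 hA00) (even1_mul_odd hB11 hA10))

end Mat

/-- The adjoint Lie algebra of `M_{1,1}(E¹)` (diagonal entries in the even part
with `1`, off-diagonal entries in the odd part) over a field of characteristic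
different from 2 satisfies the centre-by-metabelian identity `[x,y,[z,t],u] = 0`. -/
theorem stmt2 (F : Type) [Field F] (hF : ringChar F ≠ 2)
    (x y z t u : Matrix (Fin 2) (Fin 2) (GrAlg F))
    (hx : x ∈ M11carrier F (evenPart1 F)) (hy : y ∈ M11carrier F (evenPart1 F))
    (hz : z ∈ M11carrier F (evenPart1 F)) (ht : t ∈ M11carrier F (evenPart1 F))
    (hu : u ∈ M11carrier F (evenPart1 F)) :
    ⁅⁅⁅x, y⁆, ⁅z, t⁆⁆, u⁆ = 0 := by
  obtain ⟨hCd, hC00, hC01, hC10⟩ := bracket_form hx hy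
  obtain ⟨hDd, hD00, hD01, hD10⟩ := bracket_form hz ht
  set C := ⁅x, y⁆ with hC
  set D := ⁅z, t⁆ with hD
  -- the inner bracket is a central scalar matrix
  have h01 : ⁅C, D⁆ 0 1 = 0 := by
    simp only [Ring.lie_def, Matrix.sub_apply, Matrix.mul_apply, Fin.sum_univ_two]
    rw [← hCd, ← hDd, even1_comm hC00 (D 0 1), even1_comm hD00 (C 0 1)]
    abel
  have h10 : ⁅C, D⁆ 1 0 = 0 := by
    simp only [Ring.lie_def, Matrix.sub_apply, Matrix.mul_apply, Fin.sum_univ_two]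
    rw [← hCd, ← hDd, even1_comm hC00 (D 1 0), even1_comm hD00 (C 1 0)]
    abel
  have hdiag : ⁅C, D⁆ 0 0 = ⁅C, D⁆ 1 1 := by
    simp only [Ring.lie_def, Matrix.sub_apply, Matrix.mul_apply, Fin.sum_univ_two]
    rw [even1_comm hC00 (D 0 0)]
    rw [show C 1 1 * D 1 1 = D 1 1 * C 1 1 by rw [← hCd, even1_comm hC00 (D 1 1)]]
    rw [odd_anticomm hC10 hD01, odd_anticomm hD10 hC01]
    abel
  have hmem : ⁅C, D⁆ 0 0 ∈ evenPart1 F := by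
    have : ⁅C, D⁆ 0 0 = C 0 1 * D 1 0 - D 0 1 * C 1 0 := by
      simp only [Ring.lie_def, Matrix.sub_apply, Matrix.mul_apply, Fin.sum_univ_two]
      rw [even1_comm hC00 (D 0 0)]
      abel
    rw [this]
    exact sub_mem (odd_mul_odd hC01 hD10) (odd_mul_odd hD01 hC10)
  set M := ⁅C, D⁆ with hM
  ext i j
  fin_cases i <;> fin_cases j <;>
    simp only [Fin.mk_zero, Fin.mk_one, Ring.lie_def, Matrix.sub_apply, Matrix.mul_apply,
      Fin.sum_univ_two, Matrix.zero_apply] <;>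
  · simp only [h01, h10, ← hdiag, zero_mul, mul_zero, add_zero, zero_add, sub_eq_zero]
    exact even1_comm hmem _
end

section
/- In a Lie algebra satisfying [x,y,[u,v],z]=0 and [x,z,u^(p),v]=0 over a field of characteristic p > 2, the identity [x,y^(p),z,v] = [z,y^(p),x,v] holds for all elements. -/
/-- In a Lie algebra over a field of characteristic `p > 2` satisfying
`[x,y,[u,v],z] = 0` and `[x,z,u^(p),v] = 0`, the identity
`[x,y^(p),z,v] = [z,y^(p),x,v]` holds. -/
theorem stmt13 (F : Type) [Field F] (p : ℕ) (hp : 2 < p) [CharP F p]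
    (L : Type) [LieRing L] [LieAlgebra F L]
    (hcm : ∀ x y u v z : L, ⁅⁅⁅x, y⁆, ⁅u, v⁆⁆, z⁆ = 0)
    (hcp : ∀ x z u v : L, lnb ⁅x, z⁆ (List.replicate p u ++ [v]) = 0)
    (x y z v : L) :
    lnb x (List.replicate p y ++ [z, v]) = lnb z (List.replicate p y ++ [x, v]) := by
  set D : L → L := fun a => ⁅a, y⁆ with hDdef
  -- unfolding lemma
  have hrep : ∀ (n : ℕ) (w : L) (l : List L),
      lnb w (List.replicate n y ++ l) = lnb (D^[n] w) l := by
    intro n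
    induction n with
    | zero => intro w l; simp
    | succ n ih =>
      intro w l
      rw [List.replicate_succ, List.cons_append]
      show lnb ⁅w, y⁆ (List.replicate n y ++ l) = _
      rw [ih ⁅w, y⁆ l, Function.iterate_succ_apply]
  -- D is a derivation
  have hder : ∀ a b : L, D ⁅a, b⁆ = ⁅D a, b⁆ + ⁅a, D b⁆ := by
    intro a b
    show ⁅⁅a, b⁆, y⁆ = ⁅⁅a, y⁆, b⁆ + ⁅a, ⁅b, y⁆⁆
    rw [← lie_skew ⁅a, b⁆ y, leibniz_lie, ← lie_skew a y, ← lie_skew b y]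
    simp only [neg_lie, lie_neg, neg_add, neg_neg]
  have hadd : ∀ a b : L, D (a + b) = D a + D b := fun a b => add_lie a b y
  have key : ∀ n : ℕ, ∃ c : L, (∀ a : L, ⁅c, a⁆ = 0) ∧
      D^[n + 1] ⁅x, z⁆ = ⁅D^[n + 1] x, z⁆ + ⁅x, D^[n + 1] z⁆ + c := by
    intro n
    induction n with
    | zero =>
      refine ⟨0, fun a => zero_lie a, ?_⟩
      simpa using hder x z
    | succ n ih =>
      obtain ⟨c, hc, hq⟩ := ih
      have hDc : D c = 0 := hc y
      refine ⟨⁅D^[n + 1] x, D z⁆ + ⁅D x, D^[n + 1] z⁆, ?_, ?_⟩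
      · intro a
        have h1 : ⁅⁅D^[n + 1] x, D z⁆, a⁆ = 0 := by
          rw [Function.iterate_succ_apply']
          exact hcm _ _ _ _ _
        have h2 : ⁅⁅D x, D^[n + 1] z⁆, a⁆ = 0 := by
          rw [Function.iterate_succ_apply' D n z]
          exact hcm _ _ _ _ _
        rw [add_lie, h1, h2, add_zero]
      · rw [Function.iterate_succ_apply' D (n + 1), hq, hadd, hadd, hder, hder, hDc,
          Function.iterate_succ_apply' D (n + 1) x, Function.iterate_succ_apply' D (n + 1) z]
        abel
  obtain ⟨c, hc, hq⟩ := key (p - 1)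
  have hpsub : p - 1 + 1 = p := by omega
  rw [hpsub] at hq
  have h0 : ⁅D^[p] ⁅x, z⁆, v⁆ = 0 := by
    have := hcp x z y v
    rwa [hrep] at this
  rw [hq] at h0
  have hrw : ⁅⁅x, D^[p] z⁆, v⁆ = -⁅⁅D^[p] z, x⁆, v⁆ := by
    rw [← neg_lie, lie_skew]
  rw [add_lie, add_lie, hc, add_zero, hrw] at h0
  rw [hrep, hrep]
  show ⁅⁅D^[p] x, z⁆, v⁆ = ⁅⁅D^[p] z, x⁆, v⁆
  exact eq_of_sub_eq_zero (by rw [sub_eq_add_neg]; exact h0)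
end

section
/- In the adjoint Lie algebra of M_{1,1}(E) over a field of characteristic p > 2, the identity [x,y,x^(p-1),y^(p-1),v] = 0 holds for all elements (x repeated p-1 times then y repeated p-1 times, left-normalized). -/
attribute [local instance] LieRing.ofAssociativeRing

/-!
Write `x ∈ M_{1,1}(E)` as `α • 1 + Y` with `α = (x₀₀ + x₁₁) / 2` and `Y = !![β, b; c, -β]`.
Even Grassmann elements are central with vanishing `p`-th power, odd ones anticommute and square
to zero. Hence `α • 1` drops out of `x ^ p`, while the diagonal and off-diagonal parts of `Y`
anticommute and the latter cubes to zero, so `x ^ p = Y ^ p` is a central scalar plus an odd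
off-diagonal matrix. The commutator of two such matrices is a central scalar matrix. Since
`(ad x) ^ p = ad (x ^ p)` in characteristic `p`, the bracket `[x, y, x^(p-1), y^(p-1)]` equals
`⁅x ^ p, y ^ p⁆`, which is central and therefore killed by bracketing with `v`.
-/

section Grassmann
variable {F : Type} [Field F]

theorem mul_eq_neg_mul_of_mem_grange {g h : GrAlg F} (hg : g ∈ grange F) (hh : h ∈ grange F) :
    g * h = -(h * g) := by
  obtain ⟨a, rfl⟩ := hg
  obtain ⟨b, rfl⟩ := hh
  exact eq_neg_of_add_eq_zero_left (ExteriorAlgebra.ι_add_mul_swap a b)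

theorem mul_self_eq_zero_of_mem_grange {g : GrAlg F} (hg : g ∈ grange F) : g * g = 0 := by
  obtain ⟨a, rfl⟩ := hg
  exact ExteriorAlgebra.ι_sq_zero a

theorem grange_pow_mul_grange_comm {n : ℕ} {e g : GrAlg F} (he : e ∈ grange F ^ n)
    (hg : g ∈ grange F) : e * g = (-1 : F) ^ n • (g * e) := by
  induction n generalizing e with
  | zero =>
    obtain ⟨r, rfl⟩ := Submodule.mem_one.1 he
    rw [pow_zero, one_smul, Algebra.commutes]
  | succ n ih =>
    rw [pow_succ] at he
    induction he using Submodule.mul_induction_on' with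
    | mem_mul_mem a ha h hh =>
      rw [mul_assoc, mul_eq_neg_mul_of_mem_grange hh hg, mul_neg, ← mul_assoc, ih ha,
        smul_mul_assoc, mul_assoc, pow_succ, mul_neg_one, neg_smul]
    | add a _ b _ ha hb => rw [add_mul, mul_add, ha, hb, smul_add]

theorem grange_pow_mul_comm {m n : ℕ} {e f : GrAlg F} (he : e ∈ grange F ^ m)
    (hf : f ∈ grange F ^ n) : e * f = (-1 : F) ^ (m * n) • (f * e) := by
  induction n generalizing f with
  | zero =>
    obtain ⟨r, rfl⟩ := Submodule.mem_one.1 hf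
    rw [mul_zero, pow_zero, one_smul, Algebra.commutes]
  | succ n ih =>
    rw [pow_succ] at hf
    induction hf using Submodule.mul_induction_on' with
    | mem_mul_mem a ha g hg =>
      rw [← mul_assoc, ih ha, smul_mul_assoc, mul_assoc, grange_pow_mul_grange_comm he hg,
        mul_smul_comm, smul_smul, ← mul_assoc, ← pow_add, mul_add_one]
    | add a _ b _ ha hb => rw [add_mul, mul_add, ha, hb, smul_add]

theorem mem_center_of_mem_grange_pow_even {n : ℕ} {e : GrAlg F} (he : e ∈ grange F ^ (2 * n)) :
    e ∈ Subalgebra.center F (GrAlg F) := by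
  rw [Subalgebra.mem_center_iff (R := F)]
  intro z
  induction z using ExteriorAlgebra.induction with
  | algebraMap r => exact Algebra.commutes r e
  | ι m =>
    rw [grange_pow_mul_grange_comm he (LinearMap.mem_range_self _ m), pow_mul, neg_one_sq,
      one_pow, one_smul]
  | mul a b ha hb => rw [mul_assoc, hb, ← mul_assoc, ha, mul_assoc]
  | add a b ha hb => rw [add_mul, mul_add, ha, hb]

theorem mem_center_of_mem_evenPart {e : GrAlg F} (he : e ∈ evenPart F) :
    e ∈ Subalgebra.center F (GrAlg F) :=
  (iSup_le fun _ _ => mem_center_of_mem_grange_pow_even :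
    evenPart F ≤ Subalgebra.toSubmodule (Subalgebra.center F (GrAlg F))) he

theorem commute_of_mem_evenPart {e : GrAlg F} (he : e ∈ evenPart F) (z : GrAlg F) :
    Commute e z :=
  ((Subalgebra.mem_center_iff (R := F)).1 (mem_center_of_mem_evenPart he) z).symm

theorem anticomm_of_mem_oddPart {u w : GrAlg F} (hu : u ∈ oddPart F) (hw : w ∈ oddPart F) :
    u * w = -(w * u) := by
  rw [oddPart] at hu hw
  induction hu using Submodule.iSup_induction' with
  | mem i u hu =>
    induction hw using Submodule.iSup_induction' with
    | mem j w hw =>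
      rw [grange_pow_mul_comm hu hw, (Nat.odd_mul.2 ⟨odd_two_mul_add_one i,
        odd_two_mul_add_one j⟩).neg_one_pow, neg_one_smul]
    | zero => simp
    | add a b _ _ ha hb => rw [mul_add, add_mul, ha, hb, neg_add]
  | zero => simp
  | add a b _ _ ha hb => rw [mul_add, add_mul, ha, hb, neg_add]

theorem mul_self_eq_zero_of_mem_oddPart (h2 : (2 : F) ≠ 0) {u : GrAlg F} (hu : u ∈ oddPart F) :
    u * u = 0 := by
  have h : (2 : F) • (u * u) = 0 := by
    rw [two_smul]
    nth_rewrite 1 [anticomm_of_mem_oddPart hu hu]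
    exact neg_add_cancel _
  exact (smul_eq_zero.1 h).resolve_left h2

theorem iSup_grange_pow_mul_le {f g h : ℕ → ℕ} (hfg : ∀ i j, ∃ k, f i + g j = h k) :
    (⨆ i, grange F ^ f i) * (⨆ j, grange F ^ g j) ≤ ⨆ k, grange F ^ h k := by
  rw [Submodule.iSup_mul]
  refine iSup_le fun i => ?_
  rw [Submodule.mul_iSup]
  refine iSup_le fun j => ?_
  obtain ⟨k, hk⟩ := hfg i j
  rw [← pow_add, hk]
  exact le_iSup (fun k => grange F ^ h k) k

theorem oddPart_mul_oddPart_le : oddPart F * oddPart F ≤ evenPart F :=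
  iSup_grange_pow_mul_le fun i j => ⟨i + j, by ring⟩

theorem evenPart_mul_oddPart_le : evenPart F * oddPart F ≤ oddPart F :=
  iSup_grange_pow_mul_le fun i j => ⟨i + j + 1, by ring⟩

theorem pow_mul_mem_oddPart {e u : GrAlg F} (he : e ∈ evenPart F) (hu : u ∈ oddPart F)
    (n : ℕ) : e ^ n * u ∈ oddPart F := by
  induction n with
  | zero => rwa [pow_zero, one_mul]
  | succ n ih =>
    rw [pow_succ', mul_assoc]
    exact evenPart_mul_oddPart_le (Submodule.mul_mem_mul he ih)

theorem pow_char_eq_zero_of_mem_evenPart (p : ℕ) [Fact p.Prime] [CharP F p] {e : GrAlg F}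
    (he : e ∈ evenPart F) : e ^ p = 0 := by
  have : CharP (GrAlg F) p := charP_of_injective_algebraMap' F p
  -- Frobenius is additive on commuting elements, and the spanning products `u * g` square to zero.
  let P : GrAlg F → Prop := fun e => e ∈ Subalgebra.center F (GrAlg F) ∧ e ^ p = 0
  have hadd : ∀ a b, P a → P b → P (a + b) := fun a b ⟨ha, ha'⟩ ⟨hb, hb'⟩ =>
    ⟨add_mem ha hb, by
      rw [add_pow_expChar_of_commute p ((Subalgebra.mem_center_iff.1 ha b).symm), ha', hb',
        add_zero]⟩
  refine (Submodule.iSup_induction _ (motive := P) he (fun n t ht => ?_)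
    ⟨zero_mem _, zero_pow (Fact.out : p.Prime).ne_zero⟩ hadd).2
  have hdeg : grange F ^ (2 * (n + 1)) = grange F ^ (2 * n + 1) * grange F := by
    rw [← pow_succ]; ring_nf
  rw [hdeg] at ht
  induction ht using Submodule.mul_induction_on' with
  | mem_mul_mem u hu g hg =>
    refine ⟨mem_center_of_mem_grange_pow_even (n := n + 1) ?_, ?_⟩
    · rw [hdeg]
      exact Submodule.mul_mem_mul hu hg
    · have hgu : g * u = -(u * g) := by
        rw [grange_pow_mul_grange_comm hu hg, pow_succ, pow_mul, neg_one_sq, one_pow, one_mul,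
          neg_one_smul, neg_neg]
      have hsq : (u * g) ^ 2 = 0 := by
        rw [sq, mul_assoc, ← mul_assoc g, hgu, neg_mul, mul_assoc,
          mul_self_eq_zero_of_mem_grange hg, mul_zero, neg_zero, mul_zero]
      exact pow_eq_zero_of_le (Fact.out : p.Prime).two_le hsq
  | add a _ b _ ha hb => exact hadd a b ha hb

end Grassmann

section MatrixFinTwo
variable {R : Type*} [Ring R]
open Matrix

theorem add_pow_two_mul_add_three_of_anticomm {A B : R} (hAB : A * B = -(B * A))
    (hB : B ^ 3 = 0) (k : ℕ) :
    (A + B) ^ (2 * k + 3) =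
      A ^ (2 * k + 3) + A ^ (2 * k + 2) * B + (k + 1) • (A ^ (2 * k + 1) * B ^ 2) := by
  have hBA : B * A = -(A * B) := by rw [hAB, neg_neg]
  have hA2 : B * A ^ 2 = A ^ 2 * B := by
    rw [sq, ← mul_assoc, hBA, neg_mul, mul_assoc, hBA, mul_neg, neg_neg, mul_assoc]
  have hB2 : B ^ 2 * A = A * B ^ 2 := by
    rw [sq, mul_assoc, hBA, mul_neg, ← mul_assoc, hBA, neg_mul, neg_neg, mul_assoc]
  have hB3 : B * B ^ 2 = 0 := by rw [← pow_succ', hB]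
  have hB4 : B ^ 2 * B ^ 2 = 0 := by rw [sq B, mul_assoc, ← sq, hB3, mul_zero]
  have hsq : (A + B) ^ 2 = A ^ 2 + B ^ 2 := by
    rw [sq, sq, sq, add_mul, mul_add, mul_add, hAB]; abel
  induction k with
  | zero =>
    rw [show 2 * 0 + 3 = 2 + 1 from rfl, pow_succ, hsq]
    simp only [mul_add, add_mul, ← pow_succ, hB2, hB, mul_zero, zero_add, pow_one, one_smul,
      add_zero]
    abel
  | succ k ih =>
    have hB2A2 : B ^ 2 * A ^ 2 = A ^ 2 * B ^ 2 := by
      rw [sq A, ← mul_assoc, hB2, mul_assoc, hB2, mul_assoc]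
    rw [show 2 * (k + 1) + 3 = 2 * k + 3 + 2 by ring, pow_add, ih, hsq]
    simp only [add_mul, mul_add, smul_mul_assoc, mul_assoc, hA2, hB2A2, hB3, hB4, mul_zero,
      smul_zero, add_zero]
    simp only [← mul_assoc, ← pow_add, add_smul, one_smul, mul_one, add_assoc, Nat.reduceAdd]
    abel

theorem fin_two_pow_two_mul_add_three {β b c : R} (hb : Commute β b) (hc : Commute β c)
    (hcb : c * b = -(b * c)) (hbcb : b * c * b = 0) (hcbc : c * b * c = 0) {k : ℕ}
    (hβ : β ^ (2 * k + 3) = 0) :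
    !![β, b; c, -β] ^ (2 * k + 3) =
      !![(k + 1) • (β ^ (2 * k + 1) * (b * c)), β ^ (2 * k + 2) * b;
        β ^ (2 * k + 2) * c, (k + 1) • (β ^ (2 * k + 1) * (b * c))] := by
  have hdiag_pow : ∀ n : ℕ, diagonal ![β, -β] ^ n = diagonal ![β ^ n, (-β) ^ n] := fun n => by
    rw [diagonal_pow]; congr 1; funext i; fin_cases i <;> rfl
  have hsplit : !![β, b; c, -β] = diagonal ![β, -β] + !![0, b; c, 0] := by
    rw [diagonal_fin_two]; ext i j; fin_cases i <;> fin_cases j <;> simp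
  have hanti : diagonal ![β, -β] * !![0, b; c, 0] = -(!![0, b; c, 0] * diagonal ![β, -β]) := by
    rw [diagonal_fin_two, mul_fin_two, mul_fin_two]
    ext i j; fin_cases i <;> fin_cases j <;> simp [hb.eq, hc.eq]
  have hcube : !![0, b; c, 0] ^ 3 = 0 := by
    rw [pow_succ, sq, mul_fin_two, mul_fin_two]
    ext i j; fin_cases i <;> fin_cases j <;> simp [hbcb, hcbc]
  have h2 : Even (2 * k + 2) := ⟨k + 1, by ring⟩
  have h3 : Odd (2 * k + 3) := ⟨k + 1, by ring⟩
  rw [hsplit, add_pow_two_mul_add_three_of_anticomm hanti hcube, hdiag_pow, hdiag_pow, hdiag_pow,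
    sq, diagonal_fin_two, diagonal_fin_two, diagonal_fin_two, mul_fin_two, mul_fin_two,
    mul_fin_two]
  ext i j; fin_cases i <;> fin_cases j <;>
    simp [hβ, hcb, h2.neg_pow, (odd_two_mul_add_one k).neg_pow, h3.neg_pow]

theorem lie_fin_two_of_mem_center {w w' b c b' c' : R} (hw : w ∈ Set.center R)
    (hw' : w' ∈ Set.center R) (hcb' : c * b' = -(b' * c)) (hc'b : c' * b = -(b * c')) :
    ⁅!![w, b; c, w], !![w', b'; c', w']⁆ = scalar (Fin 2) (b * c' - b' * c) := by
  rw [Semigroup.mem_center_iff] at hw hw'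
  rw [Ring.lie_def, mul_fin_two, mul_fin_two, scalar_apply, diagonal_fin_two]
  ext i j; fin_cases i <;> fin_cases j <;>
    simp [hcb', hc'b, hw' w, hw b', hw' b, hw' c, hw c'] <;> abel

end MatrixFinTwo

section Adjoint
open LieAlgebra

theorem lnb_replicate (R : Type*) {L : Type*} [CommRing R] [LieRing L] [LieAlgebra R L]
    (z x : L) (n : ℕ) : lnb z (List.replicate n x) = ((-ad R L x) ^ n) z := by
  induction n generalizing z with
  | zero => rfl
  | succ n ih =>
    rw [pow_succ, Module.End.mul_apply, List.replicate_succ, LinearMap.neg_apply, ad_apply,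
      lie_skew, ← ih]
    rfl

variable (F : Type*) {A : Type*} [Field F] [Ring A] [Algebra F A] [Nontrivial A]

theorem ad_pow_char (p : ℕ) [Fact p.Prime] [CharP F p] (x : A) :
    ad F A x ^ p = ad F A (x ^ p) := by
  have : CharP (Module.End F A) p := charP_of_injective_algebraMap' F p
  rw [ad_eq_lmul_left_sub_lmul_right, Pi.sub_apply, Pi.sub_apply,
    sub_pow_char_of_commute p (LinearMap.commute_mulLeft_right x x), LinearMap.pow_mulLeft,
    LinearMap.pow_mulRight]

theorem lnb_replicate_char (p : ℕ) [Fact p.Prime] [CharP F p] (z x : A) :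
    lnb z (List.replicate p x) = ⁅z, x ^ p⁆ := by
  have : CharP (Module.End F A) p := charP_of_injective_algebraMap' F p
  rw [lnb_replicate F, neg_pow, neg_one_pow_char, neg_one_mul, ad_pow_char, LinearMap.neg_apply,
    ad_apply, lie_skew]

theorem lnb_lie_replicate_pred_append (p : ℕ) [Fact p.Prime] [CharP F p] (x y : A) :
    lnb ⁅x, y⁆ (List.replicate (p - 1) x ++ List.replicate (p - 1) y) = ⁅x ^ p, y ^ p⁆ := by
  have hp : p - 1 + 1 = p := Nat.sub_add_cancel (Fact.out : p.Prime).one_le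
  have hcons : ∀ (z w : A), lnb ⁅z, w⁆ (List.replicate (p - 1) w) = ⁅z, w ^ p⁆ := fun z w => by
    rw [← lnb_replicate_char F p, ← hp, List.replicate_succ]; rfl
  have hx : lnb ⁅x, y⁆ (List.replicate (p - 1) x) = ⁅x ^ p, y⁆ := by
    rw [← lie_skew, lnb_replicate F, map_neg, ← lnb_replicate F, hcons, lie_skew]
  rw [lnb, List.foldl_append, ← lnb, ← lnb, hx, hcons]

end Adjoint

section M11
variable {F : Type} [Field F] (p : ℕ) [Fact p.Prime] [CharP F p]
open Matrix

theorem pow_char_eq_of_mem_M11carrier (hp : p ≠ 2) {x : Matrix (Fin 2) (Fin 2) (GrAlg F)}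
    (hx : x ∈ M11carrier F (evenPart F)) :
    ∃ w ∈ Subalgebra.center F (GrAlg F), ∃ b ∈ oddPart F, ∃ c ∈ oddPart F,
      x ^ p = !![w, b; c, w] := by
  obtain ⟨ha, hd, hb, hc⟩ := hx
  have h2 : (2 : F) ≠ 0 := Ring.two_ne_zero (by rwa [ringChar.eq F p])
  obtain ⟨k, rfl⟩ : ∃ k, p = 2 * k + 3 := by
    obtain ⟨k, hk⟩ := (Fact.out : p.Prime).odd_of_ne_two hp
    exact ⟨k - 1, by have := (Fact.out : p.Prime).two_le; omega⟩
  have : CharP (Matrix (Fin 2) (Fin 2) (GrAlg F)) (2 * k + 3) :=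
    charP_of_injective_algebraMap' F _
  set α : GrAlg F := (2 : F)⁻¹ • (x 0 0 + x 1 1)
  set β : GrAlg F := (2 : F)⁻¹ • (x 0 0 - x 1 1)
  have hα : α ∈ evenPart F := Submodule.smul_mem _ _ (add_mem ha hd)
  have hβ : β ∈ evenPart F := Submodule.smul_mem _ _ (sub_mem ha hd)
  have hsum : α + β = x 0 0 := by
    rw [← smul_add, add_add_sub_cancel, ← two_smul F, smul_smul, inv_mul_cancel₀ h2, one_smul]
  have hdiff : α - β = x 1 1 := by
    rw [← smul_sub, add_sub_sub_cancel, ← two_smul F, smul_smul, inv_mul_cancel₀ h2, one_smul]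
  have hsplit : x = scalar (Fin 2) α + !![β, x 0 1; x 1 0, -β] := by
    conv_lhs => rw [eta_fin_two x, ← hsum, ← hdiff]
    rw [scalar_apply, diagonal_fin_two]
    ext i j; fin_cases i <;> fin_cases j <;> simp [sub_eq_add_neg]
  have hcb : x 1 0 * x 0 1 = -(x 0 1 * x 1 0) := anticomm_of_mem_oddPart hc hb
  refine ⟨(k + 1) • (β ^ (2 * k + 1) * (x 0 1 * x 1 0)), ?_,
    _, pow_mul_mem_oddPart hβ hb (2 * k + 2), _, pow_mul_mem_oddPart hβ hc (2 * k + 2), ?_⟩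
  · exact nsmul_mem (mul_mem (pow_mem (mem_center_of_mem_evenPart hβ) _)
      (mem_center_of_mem_evenPart (oddPart_mul_oddPart_le (Submodule.mul_mem_mul hb hc)))) _
  conv_lhs => rw [hsplit]
  rw [add_pow_char_of_commute _ (scalar_commute _ (commute_of_mem_evenPart hα) _),
    ← map_pow, pow_char_eq_zero_of_mem_evenPart _ hα, map_zero, zero_add]
  refine fin_two_pow_two_mul_add_three (commute_of_mem_evenPart hβ _)
    (commute_of_mem_evenPart hβ _) hcb ?_ ?_ (pow_char_eq_zero_of_mem_evenPart _ hβ)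
  · rw [mul_assoc, hcb, mul_neg, ← mul_assoc, mul_self_eq_zero_of_mem_oddPart h2 hb, zero_mul,
      neg_zero]
  · rw [hcb, neg_mul, mul_assoc, mul_self_eq_zero_of_mem_oddPart h2 hc, mul_zero, neg_zero]

theorem lie_pow_char_mem_center (hp : p ≠ 2) {x y : Matrix (Fin 2) (Fin 2) (GrAlg F)}
    (hx : x ∈ M11carrier F (evenPart F)) (hy : y ∈ M11carrier F (evenPart F)) :
    ⁅x ^ p, y ^ p⁆ ∈ Set.center (Matrix (Fin 2) (Fin 2) (GrAlg F)) := by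
  obtain ⟨w, hw, b, hb, c, hc, hxp⟩ := pow_char_eq_of_mem_M11carrier p hp hx
  obtain ⟨w', hw', b', hb', c', hc', hyp⟩ := pow_char_eq_of_mem_M11carrier p hp hy
  rw [hxp, hyp, lie_fin_two_of_mem_center hw hw' (anticomm_of_mem_oddPart hc hb')
    (anticomm_of_mem_oddPart hc' hb), center_eq_scalar_image]
  exact ⟨_, sub_mem
    (mem_center_of_mem_evenPart (oddPart_mul_oddPart_le (Submodule.mul_mem_mul hb hc')))
    (mem_center_of_mem_evenPart (oddPart_mul_oddPart_le (Submodule.mul_mem_mul hb' hc))), rfl⟩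

end M11

theorem stmt18_general (F : Type) [Field F] (p : ℕ) (hp : 2 < p) [CharP F p]
    (x y v : Matrix (Fin 2) (Fin 2) (GrAlg F))
    (hx : x ∈ M11carrier F (evenPart F)) (hy : y ∈ M11carrier F (evenPart F)) :
    lnb ⁅x, y⁆ (List.replicate (p - 1) x ++ List.replicate (p - 1) y ++ [v]) = 0 := by
  have : Fact p.Prime := ⟨(CharP.char_is_prime_or_zero F p).resolve_right (by omega)⟩
  have hcentral := lie_pow_char_mem_center p hp.ne' hx hy
  have hsnoc : ∀ (z : Matrix (Fin 2) (Fin 2) (GrAlg F)) l, lnb z (l ++ [v]) = ⁅lnb z l, v⁆ :=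
    fun z l => List.foldl_concat _ _ _ _
  rw [hsnoc, lnb_lie_replicate_pred_append F p, Ring.lie_def,
    Semigroup.mem_center_iff.1 hcentral v, sub_self]

/-- In the adjoint Lie algebra of `M_{1,1}(E)` over a field of characteristic
`p > 2`, the identity `[x,y,x^(p-1),y^(p-1),v] = 0` holds. -/
theorem stmt18 (F : Type) [Field F] (p : ℕ) (hp : 2 < p) [CharP F p]
    (x y v : Matrix (Fin 2) (Fin 2) (GrAlg F))
    (hx : x ∈ M11carrier F (evenPart F)) (hy : y ∈ M11carrier F (evenPart F))
    (hv : v ∈ M11carrier F (evenPart F)) :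
    lnb ⁅x, y⁆ (List.replicate (p - 1) x ++ List.replicate (p - 1) y ++ [v]) = 0 :=
  stmt18_general F p hp x y v hx hy
end
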